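/- arXiv:2205.04805 — 3 statements merged into one kernel-verified Lean document; each statement's English description precedes it below -/
import Mathlib

section
/- Let σ be a finite signature and let A and B be valued σ-structures. Then there exists a fractional homomorphism from A to B if and only if Opt(I,B) ≤ Opt(I,A) for every non-negative finite-valued σ-structure I. -/
open scoped BigOperators Classical

namespace PVCSP

/-! ## Valued structures -/

/-- The value `Val(I,A,h)` of an assignment `h : I → A`, where the input structure is
given by weights `vI` and the template structure by costs `vA` (in `ℚ ∪ {∞}`). -/
def Val {σ : Type} [Fintype σ] (ar : σ → ℕ) {I A : Type} [Fintype I]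
    (vI : ∀ R : σ, (Fin (ar R) → I) → ℚ)
    (vA : ∀ R : σ, (Fin (ar R) → A) → WithTop ℚ) (h : I → A) : WithTop ℚ :=
  ∑ R : σ, ∑ v : Fin (ar R) → I, (vI R v : WithTop ℚ) * vA R (fun i => h (v i))

/-- `Opt(I,A)`: the minimum value over all assignments. -/
def Opt {σ : Type} [Fintype σ] (ar : σ → ℕ) {I A : Type} [Fintype I] [DecidableEq I]
    [Fintype A]
    (vI : ∀ R : σ, (Fin (ar R) → I) → ℚ)
    (vA : ∀ R : σ, (Fin (ar R) → A) → WithTop ℚ) : WithTop ℚ :=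
  (Finset.univ : Finset (I → A)).inf fun h => Val ar vI vA h

/-- Non-negativity of an input (finite-valued) structure. -/
def NNeg {σ : Type} (ar : σ → ℕ) {I : Type}
    (vI : ∀ R : σ, (Fin (ar R) → I) → ℚ) : Prop :=
  ∀ R v, 0 ≤ vI R v

/-- A fractional homomorphism from `A` to `B`. -/
def IsFracHom {σ : Type} [Fintype σ] (ar : σ → ℕ) {A B : Type}
    [Fintype A] [DecidableEq A] [Fintype B]
    (vA : ∀ R : σ, (Fin (ar R) → A) → WithTop ℚ)
    (vB : ∀ R : σ, (Fin (ar R) → B) → WithTop ℚ)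
    (μ : (A → B) → ℚ) : Prop :=
  (∀ f, 0 ≤ μ f) ∧ (∑ f : A → B, μ f = 1) ∧
    ∀ (R : σ) (a : Fin (ar R) → A),
      ∑ f : A → B, (μ f : WithTop ℚ) * vB R (fun i => f (a i)) ≤ vA R a

/-- A symmetric `n`-ary operation. -/
def IsSymmetricOp {A B : Type} {n : ℕ} (f : (Fin n → A) → B) : Prop :=
  ∀ (ρ : Equiv.Perm (Fin n)) (x : Fin n → A), f (fun i => x (ρ i)) = f x

/-- An `n`-ary fractional polymorphism of the pair `(A,B)`. -/
def IsFracPoly {σ : Type} [Fintype σ] (ar : σ → ℕ) {A B : Type}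
    [Fintype A] [DecidableEq A] [Fintype B]
    (vA : ∀ R : σ, (Fin (ar R) → A) → WithTop ℚ)
    (vB : ∀ R : σ, (Fin (ar R) → B) → WithTop ℚ)
    (n : ℕ) (ω : ((Fin n → A) → B) → ℚ) : Prop :=
  (∀ f, 0 ≤ ω f) ∧ (∑ f : (Fin n → A) → B, ω f = 1) ∧
    ∀ (R : σ) (a : Fin n → (Fin (ar R) → A)),
      ∑ f : (Fin n → A) → B, (ω f : WithTop ℚ) * vB R (fun j => f (fun i => a i j))
        ≤ ((((n : ℚ)⁻¹ : ℚ)) : WithTop ℚ) * ∑ i : Fin n, vA R (a i)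

/-- A dual fractional homomorphism from `I` to `J` (both non-negative finite-valued). -/
def IsDualFracHom {σ : Type} [Fintype σ] (ar : σ → ℕ) {I J : Type}
    [Fintype I] [DecidableEq I] [Fintype J] [DecidableEq J]
    (vI : ∀ R : σ, (Fin (ar R) → I) → ℚ)
    (vJ : ∀ R : σ, (Fin (ar R) → J) → ℚ)
    (η : (I → J) → ℚ) : Prop :=
  (∀ f, 0 ≤ η f) ∧ (∑ f : I → J, η f = 1) ∧
    ∀ (R : σ) (u : Fin (ar R) → J),
      ∑ f : I → J, η f *
          ∑ v ∈ Finset.univ.filter (fun v : Fin (ar R) → I => (fun i => f (v i)) = u), vI R v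
        ≤ vJ R u

/-! ## Linear programming relaxations -/

/-- Canonical embedding of `ℚ ∪ {∞}` into the extended reals. -/
noncomputable def toE (x : WithTop ℚ) : EReal :=
  x.recTopCoe ⊤ (fun q => ((q : ℝ) : EReal))

/-- The objective value of an LP solution `pc`. -/
def objVal {σ : Type} [Fintype σ] (ar : σ → ℕ) {I A : Type} [Fintype I] [Fintype A]
    (vI : ∀ R : σ, (Fin (ar R) → I) → ℚ)
    (vA : ∀ R : σ, (Fin (ar R) → A) → WithTop ℚ)
    (pc : ∀ R : σ, (Fin (ar R) → I) → (Fin (ar R) → A) → ℚ) : WithTop ℚ :=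
  ∑ R : σ, ∑ v : Fin (ar R) → I, ∑ a : Fin (ar R) → A,
    (pc R v a : WithTop ℚ) * ((vI R v : WithTop ℚ) * vA R a)

/-- Feasibility for the basic linear programming relaxation `BLP(I,A)`. -/
def BLPFeas {σ : Type} [Fintype σ] (ar : σ → ℕ) {I A : Type} [Fintype I] [Fintype A]
    [DecidableEq A]
    (vI : ∀ R : σ, (Fin (ar R) → I) → ℚ)
    (vA : ∀ R : σ, (Fin (ar R) → A) → WithTop ℚ)
    (pv : I → A → ℚ)
    (pc : ∀ R : σ, (Fin (ar R) → I) → (Fin (ar R) → A) → ℚ) : Prop :=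
  (∀ R v a, 0 < vI R v → 0 ≤ pc R v a) ∧
  (∀ u : I, ∑ a : A, pv u a = 1) ∧
  (∀ R v, 0 < vI R v → ∀ (i : Fin (ar R)) (a : A),
      pv (v i) a = ∑ t ∈ Finset.univ.filter (fun t : Fin (ar R) → A => t i = a), pc R v t) ∧
  (∀ R v, 0 < vI R v → ∀ t : Fin (ar R) → A, vA R t = ⊤ → pc R v t = 0)

/-- Feasibility for the Sherali–Adams relaxation `SA¹(I,A)`. -/
def SA1Feas {σ : Type} [Fintype σ] (ar : σ → ℕ) {I A : Type} [Fintype I] [Fintype A]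
    [DecidableEq A]
    (vI : ∀ R : σ, (Fin (ar R) → I) → ℚ)
    (vA : ∀ R : σ, (Fin (ar R) → A) → WithTop ℚ)
    (pv : I → A → ℚ)
    (pc : ∀ R : σ, (Fin (ar R) → I) → (Fin (ar R) → A) → ℚ) : Prop :=
  BLPFeas ar vI vA pv pc ∧
  (∀ R v, 0 < vI R v → ∀ t : Fin (ar R) → A,
      (∃ i j, v i = v j ∧ t i ≠ t j) → pc R v t = 0)

/-- The optimal value `Opt^BLP(I,A)` (equal to `⊤` if the program is infeasible). -/
noncomputable def OptBLP {σ : Type} [Fintype σ] (ar : σ → ℕ) {I A : Type}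
    [Fintype I] [Fintype A] [DecidableEq A]
    (vI : ∀ R : σ, (Fin (ar R) → I) → ℚ)
    (vA : ∀ R : σ, (Fin (ar R) → A) → WithTop ℚ) : EReal :=
  sInf { x : EReal | ∃ pv pc, BLPFeas ar vI vA pv pc ∧ x = toE (objVal ar vI vA pc) }

/-- The optimal value `Opt^{SA¹}(I,A)` (equal to `⊤` if the program is infeasible). -/
noncomputable def OptSA1 {σ : Type} [Fintype σ] (ar : σ → ℕ) {I A : Type}
    [Fintype I] [Fintype A] [DecidableEq A]
    (vI : ∀ R : σ, (Fin (ar R) → I) → ℚ)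
    (vA : ∀ R : σ, (Fin (ar R) → A) → WithTop ℚ) : EReal :=
  sInf { x : EReal | ∃ pv pc, SA1Feas ar vI vA pv pc ∧ x = toE (objVal ar vI vA pc) }

/-- The structure `LP^m(A)` on the universe of `m`-element multisets over `A`. -/
def lpPow {σ : Type} [Fintype σ] (ar : σ → ℕ) {A : Type} [Fintype A] [DecidableEq A]
    (m : ℕ) (vA : ∀ R : σ, (Fin (ar R) → A) → WithTop ℚ) :
    ∀ R : σ, (Fin (ar R) → Sym A m) → WithTop ℚ :=
  fun R s =>
    ((((m : ℚ)⁻¹ : ℚ)) : WithTop ℚ) *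
      ((Finset.univ.filter (fun t : Fin (ar R) → (Fin m → A) =>
          ∀ j, Multiset.map (t j) Finset.univ.val = Sym.toMultiset (s j))).inf
        (fun t => ∑ i : Fin m, vA R (fun j => t j i)))

/-! ## The graph of an input structure and iterated degrees -/

/-- Potential constraint vertices of the graph `G(I)`. -/
abbrev CVert (σ : Type) (ar : σ → ℕ) (I : Type) := Σ R : σ, (Fin (ar R) → I)

/-- The label of the edge between variable `u` and constraint `c`: the set of
coordinates of `c` at which `u` occurs. -/
def edgeLab {σ : Type} {ar : σ → ℕ} {I : Type} [DecidableEq I]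
    (u : I) (c : CVert σ ar I) : Finset ℕ :=
  (Finset.univ.filter (fun i : Fin (ar c.1) => c.2 i = u)).image Fin.val

/-- The type of `k`-th iterated degrees over signature `σ`. -/
def Deg (σ : Type) : ℕ → Type
  | 0 => Option (σ × ℚ)
  | k+1 => Multiset (Finset ℕ × Deg σ k)

/-- The `k`-th iterated degree of a vertex of `G(I)` (a variable or a constraint). -/
def degV {σ : Type} [Fintype σ] (ar : σ → ℕ) {I : Type} [Fintype I] [DecidableEq I]
    (vI : ∀ R : σ, (Fin (ar R) → I) → ℚ) :
    (k : ℕ) → (I ⊕ CVert σ ar I) → Deg σ k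
  | 0, Sum.inl _ => (none : Option (σ × ℚ))
  | 0, Sum.inr c => some (c.1, vI c.1 c.2)
  | k+1, Sum.inl u =>
      ((Finset.univ.filter
          (fun c : CVert σ ar I => 0 < vI c.1 c.2 ∧ ∃ i, c.2 i = u)).val).map
        (fun c => (edgeLab u c, degV ar vI k (Sum.inr c)))
  | k+1, Sum.inr c =>
      ((Finset.univ.filter (fun u : I => ∃ i, c.2 i = u)).val).map
        (fun u => (edgeLab u c, degV ar vI k (Sum.inl u)))

/-- The full iterated degree type. -/
def IterDeg (σ : Type) : Type := ∀ k : ℕ, Deg σ k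

/-- The iterated degree `δ(x)` of a vertex. -/
def itdeg {σ : Type} [Fintype σ] (ar : σ → ℕ) {I : Type} [Fintype I] [DecidableEq I]
    (vI : ∀ R : σ, (Fin (ar R) → I) → ℚ) (x : I ⊕ CVert σ ar I) : IterDeg σ :=
  fun k => degV ar vI k x

/-- The iterated degree sequence `δ(I)` (a multiset over all vertices of `G(I)`). -/
def degSeq {σ : Type} [Fintype σ] (ar : σ → ℕ) {I : Type} [Fintype I] [DecidableEq I]
    (vI : ∀ R : σ, (Fin (ar R) → I) → ℚ) : Multiset (IterDeg σ) :=
  (Finset.univ.val.map (fun u : I => itdeg ar vI (Sum.inl u))) +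
  ((Finset.univ.filter (fun c : CVert σ ar I => 0 < vI c.1 c.2)).val.map
      (fun c => itdeg ar vI (Sum.inr c)))

/-- Adjacency in the graph `G(I)`. -/
def Adj {σ : Type} (ar : σ → ℕ) {I : Type}
    (vI : ∀ R : σ, (Fin (ar R) → I) → ℚ) :
    (I ⊕ CVert σ ar I) → (I ⊕ CVert σ ar I) → Prop
  | Sum.inl u, Sum.inr c => 0 < vI c.1 c.2 ∧ ∃ i, c.2 i = u
  | Sum.inr c, Sum.inl u => 0 < vI c.1 c.2 ∧ ∃ i, c.2 i = u
  | _, _ => False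

/-- Actual vertices of `G(I)`: all variables and the positive-weight constraints. -/
def IsVert {σ : Type} (ar : σ → ℕ) {I : Type}
    (vI : ∀ R : σ, (Fin (ar R) → I) → ℚ) : (I ⊕ CVert σ ar I) → Prop
  | Sum.inl _ => True
  | Sum.inr c => 0 < vI c.1 c.2

/-- Connectedness of the input structure `I` (i.e. of its graph `G(I)`). -/
def Conn {σ : Type} (ar : σ → ℕ) {I : Type}
    (vI : ∀ R : σ, (Fin (ar R) → I) → ℚ) : Prop :=
  Nonempty I ∧ ∀ x y, IsVert ar vI x → IsVert ar vI y →
    Relation.ReflTransGen (Adj ar vI) x y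

/-- Weak congruence: `|J| ⬝ δ(I) = |I| ⬝ δ(J)`. -/
def WeakCongr {σ : Type} [Fintype σ] (ar : σ → ℕ) {I J : Type}
    [Fintype I] [DecidableEq I] [Fintype J] [DecidableEq J]
    (vI : ∀ R : σ, (Fin (ar R) → I) → ℚ)
    (vJ : ∀ R : σ, (Fin (ar R) → J) → ℚ) : Prop :=
  (Fintype.card J) • degSeq ar vI = (Fintype.card I) • degSeq ar vJ

/-- Membership of a variable in the connected component of the variable `x₀`. -/
def InComp {σ : Type} (ar : σ → ℕ) {I : Type}
    (vI : ∀ R : σ, (Fin (ar R) → I) → ℚ) (x₀ u : I) : Prop :=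
  Relation.ReflTransGen (Adj ar vI) (Sum.inl x₀) (Sum.inl u)

/-!
Averaging proves the forward direction: for any assignment `h : I → A`, the maps `f ∘ h` with
`f ∼ μ` have expected cost at most `Val(I,A,h)`, so one of them costs at most that much.

Conversely, a fractional homomorphism amounts to a probability distribution `μ` on the maps
`A → B` that keep every finite-cost tuple of `A` finite, such that the excess `B(f c) - A(c)` has
nonpositive `μ`-average at every finite-cost tuple `c`. If there were none, Ville's alternative
would give weights `y` on the tuples, which may be taken strictly positive, for which every such
map has positive `y`-weighted excess. On the instance with universe `A` whose constraints are the
finite-cost tuples weighted by `y`, every assignment into `B` of cost at most `Val(I,A,id)` keeps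
those tuples finite, hence has nonpositive weighted excess, contradicting `Opt(I,B) ≤ Opt(I,A)`.
The alternative is proved by Fourier–Motzkin elimination over an arbitrary ordered field, so that
`μ` comes out rational.
-/

section FourierMotzkin

variable {𝕜 : Type*} [Field 𝕜] {ι : Type*}

def fmCombo (j : ι) (s u : ι → 𝕜) : ι → 𝕜 :=
  (s j - u j)⁻¹ • (-u j • s + s j • u)

lemma fmCombo_apply_self (j : ι) (s u : ι → 𝕜) : fmCombo j s u j = 0 := by
  simp only [fmCombo, Pi.smul_apply, Pi.add_apply, smul_eq_mul]
  ring

lemma dotProduct_fmCombo [Fintype ι] (y : ι → 𝕜) (j : ι) (s u : ι → 𝕜) :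
    y ⬝ᵥ fmCombo j s u = (s j - u j)⁻¹ * (-u j * (y ⬝ᵥ s) + s j * (y ⬝ᵥ u)) := by
  simp only [fmCombo, dotProduct_smul, dotProduct_add, smul_eq_mul]

variable [LinearOrder 𝕜]

/-- Fourier–Motzkin elimination of the coordinate `j`. -/
def fmElim (j : ι) (S : Set (ι → 𝕜)) : Set (ι → 𝕜) :=
  {s ∈ S | s j ≤ 0} ∪ Set.image2 (fmCombo j) {s ∈ S | 0 < s j} {u ∈ S | u j < 0}

lemma finite_fmElim {S : Set (ι → 𝕜)} (hS : S.Finite) (j : ι) : (fmElim j S).Finite :=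
  (hS.sep _).union ((hS.sep _).image2 _ (hS.sep _))

lemma fmElim_subset_nonpos (j : ι) (S : Set (ι → 𝕜)) : fmElim j S ⊆ {x | x j ≤ 0} := by
  rintro _ (⟨-, hsj⟩ | ⟨s, -, u, -, rfl⟩)
  · exact hsj
  · exact (fmCombo_apply_self j s u).le

variable [IsStrictOrderedRing 𝕜]

lemma fmCombo_mem_convexHull {S : Set (ι → 𝕜)} {j : ι} {s u : ι → 𝕜} (hs : s ∈ S) (hu : u ∈ S)
    (hsj : 0 < s j) (huj : u j < 0) : fmCombo j s u ∈ convexHull 𝕜 S := by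
  have hd : 0 < s j - u j := by linarith
  have key := convex_convexHull 𝕜 S (subset_convexHull 𝕜 S hs) (subset_convexHull 𝕜 S hu)
    (mul_nonneg (inv_nonneg.2 hd.le) (neg_nonneg.2 huj.le)) (mul_nonneg (inv_nonneg.2 hd.le) hsj.le)
    (by field_simp; ring)
  convert key using 1
  simp only [fmCombo, smul_add, smul_smul]

lemma fmElim_subset_convexHull (j : ι) (S : Set (ι → 𝕜)) : fmElim j S ⊆ convexHull 𝕜 S := by
  rintro _ (⟨hs, -⟩ | ⟨s, ⟨hs, hsj⟩, u, ⟨hu, huj⟩, rfl⟩)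
  · exact subset_convexHull 𝕜 S hs
  · exact fmCombo_mem_convexHull hs hu hsj huj

lemma exists_nonneg_forall_pos_add_mul {X : Type*} {S : Set X} (hS : S.Finite) (a b : X → 𝕜)
    (hnonpos : ∀ s ∈ S, b s ≤ 0 → 0 < a s)
    (hpair : ∀ s ∈ S, ∀ u ∈ S, 0 < b s → b u < 0 → 0 < -b u * a s + b s * a u) :
    ∃ t, 0 ≤ t ∧ ∀ s ∈ S, 0 < a s + t * b s := by
  -- `t` has to exceed `0` and each `-a s / b s` with `b s > 0`, and stay below each `a u / -b u`
  -- with `b u < 0`; `hnonpos` and `hpair` say that every lower bound is below every upper bound.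
  obtain ⟨t, hlow, hup⟩ := Set.Finite.exists_between'
    (Set.Finite.insert 0 ((hS.sep fun s => 0 < b s).image fun s => -a s / b s))
    ((hS.sep fun u => b u < 0).image fun u => a u / -b u) (by
      rintro _ hl _ ⟨u, ⟨hu, hbu⟩, rfl⟩
      have hbu' : 0 < -b u := neg_pos.2 hbu
      rcases hl with rfl | ⟨s, ⟨hs, hbs⟩, rfl⟩
      · exact div_pos (hnonpos u hu hbu.le) hbu'
      · rw [div_lt_div_iff₀ hbs hbu']
        linarith [hpair s hs u hu hbs hbu])
  refine ⟨t, (hlow 0 (Set.mem_insert _ _)).le, fun s hs => ?_⟩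
  rcases lt_trichotomy (b s) 0 with hbs | hbs | hbs
  · have := hup _ ⟨s, ⟨hs, hbs⟩, rfl⟩
    rw [lt_div_iff₀ (neg_pos.2 hbs)] at this
    linarith
  · simpa [hbs] using hnonpos s hs hbs.le
  · have := hlow _ (Set.mem_insert_of_mem _ ⟨s, ⟨hs, hbs⟩, rfl⟩)
    rw [div_lt_iff₀ hbs] at this
    linarith

/-- Only the coordinates in `T` are required to be nonpositive, so that the alternative can be
proved by eliminating one coordinate at a time. -/
theorem exists_mem_convexHull_nonpos_or_exists_dotProduct_pos [Fintype ι] (T : Finset ι) :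
    ∀ S : Set (ι → 𝕜), S.Finite →
      (∃ x ∈ convexHull 𝕜 S, ∀ i ∈ T, x i ≤ 0) ∨ ∃ y, 0 ≤ y ∧ ∀ s ∈ S, 0 < y ⬝ᵥ s := by
  induction T using Finset.induction_on with
  | empty =>
    intro S _
    rcases S.eq_empty_or_nonempty with rfl | ⟨s, hs⟩
    · exact Or.inr ⟨0, le_rfl, by simp⟩
    · exact Or.inl ⟨s, subset_convexHull 𝕜 S hs, by simp⟩
  | insert j T _ ih =>
    intro S hS
    rcases ih (fmElim j S) (finite_fmElim hS j) with ⟨x, hx, hxT⟩ | ⟨y, hy, hyS⟩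
    · have hxS := convexHull_min (fmElim_subset_convexHull j S) (convex_convexHull 𝕜 S) hx
      have hxj : x j ≤ 0 := convexHull_min (fmElim_subset_nonpos j S)
        (convex_halfSpace_le (f := fun x : ι → 𝕜 => x j) ⟨fun _ _ => rfl, fun _ _ => rfl⟩ 0) hx
      exact Or.inl ⟨x, hxS, Finset.forall_mem_insert _ _ _ |>.2 ⟨hxj, hxT⟩⟩
    · obtain ⟨t, ht, hpos⟩ := exists_nonneg_forall_pos_add_mul hS (y ⬝ᵥ ·) (· j)
        (fun s hs hsj => hyS s (Or.inl ⟨hs, hsj⟩))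
        (fun s hs u hu hsj huj => by
          have := hyS _ (Or.inr ⟨s, ⟨hs, hsj⟩, u, ⟨hu, huj⟩, rfl⟩)
          rw [dotProduct_fmCombo] at this
          exact pos_of_mul_pos_right this (inv_nonneg.2 (by linarith)))
      refine Or.inr ⟨y + Pi.single j t, add_nonneg hy (Pi.single_nonneg.2 ht), fun s hs => ?_⟩
      rw [add_dotProduct, single_dotProduct]
      exact hpos s hs

lemma exists_mem_stdSimplex_of_mem_convexHull_image {E F : Type*} [AddCommGroup E] [Module 𝕜 E]
    [Fintype F] {v : F → E} {G : Set F} {x : E} (hx : x ∈ convexHull 𝕜 (v '' G)) :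
    ∃ μ ∈ stdSimplex 𝕜 F, (∀ f ∉ G, μ f = 0) ∧ ∑ f, μ f • v f = x := by
  refine convexHull_min (t := {x | ∃ μ ∈ stdSimplex 𝕜 F, (∀ f ∉ G, μ f = 0) ∧ ∑ f, μ f • v f = x})
    ?_ ?_ hx
  · rintro _ ⟨f, hf, rfl⟩
    refine ⟨Pi.single f 1, single_mem_stdSimplex 𝕜 f, fun g hg => ?_, by simp [Pi.single_apply]⟩
    exact Pi.single_eq_of_ne (by rintro rfl; exact hg hf) _
  · rintro _ ⟨μ, hμ, hμG, rfl⟩ _ ⟨ν, hν, hνG, rfl⟩ a b ha hb hab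
    refine ⟨a • μ + b • ν, convex_stdSimplex 𝕜 F hμ hν ha hb hab,
      fun f hf => by simp [hμG f hf, hνG f hf], ?_⟩
    simp only [Pi.add_apply, Pi.smul_apply, smul_eq_mul, add_smul, mul_smul,
      Finset.sum_add_distrib, Finset.smul_sum]

lemma exists_pos_forall_pos_add_mul {X : Type*} {S : Set X} (hS : S.Finite) (a b : X → 𝕜)
    (ha : ∀ s ∈ S, 0 < a s) : ∃ ε, 0 < ε ∧ ∀ s ∈ S, 0 < a s + ε * b s := by
  obtain ⟨ε, hlow, hup⟩ := Set.Finite.exists_between' (Set.finite_singleton 0)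
    (hS.image fun s => a s / (|b s| + 1)) (by
      rintro _ rfl _ ⟨s, hs, rfl⟩
      exact div_pos (ha s hs) (by positivity))
  have hε := hlow 0 rfl
  refine ⟨ε, hε, fun s hs => ?_⟩
  have := hup _ ⟨s, hs, rfl⟩
  rw [lt_div_iff₀ (by positivity)] at this
  nlinarith [neg_abs_le (b s), abs_nonneg (b s)]

theorem exists_mem_stdSimplex_sum_smul_nonpos [Fintype ι] {F : Type*} [Fintype F]
    (v : F → ι → 𝕜) (G : Set F) (h : ∀ y : ι → 𝕜, (∀ i, 0 < y i) → ∃ f ∈ G, y ⬝ᵥ v f ≤ 0) :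
    ∃ μ ∈ stdSimplex 𝕜 F, (∀ f ∉ G, μ f = 0) ∧ ∑ f, μ f • v f ≤ 0 := by
  have hS : (v '' G).Finite := G.toFinite.image v
  rcases exists_mem_convexHull_nonpos_or_exists_dotProduct_pos Finset.univ _ hS with
    ⟨x, hx, hx0⟩ | ⟨y, hy, hyS⟩
  · obtain ⟨μ, hμ, hμG, rfl⟩ := exists_mem_stdSimplex_of_mem_convexHull_image hx
    exact ⟨μ, hμ, hμG, fun i => hx0 i (Finset.mem_univ i)⟩
  · obtain ⟨ε, hε, hpos⟩ := exists_pos_forall_pos_add_mul hS (y ⬝ᵥ ·) (1 ⬝ᵥ ·) hyS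
    obtain ⟨f, hf, hle⟩ := h (y + ε • 1) fun i => by simpa using add_pos_of_nonneg_of_pos (hy i) hε
    rw [add_dotProduct, smul_dotProduct, smul_eq_mul] at hle
    exact absurd hle (hpos _ ⟨f, hf, rfl⟩).not_ge

end FourierMotzkin

section WithTopScalars

variable {α ι : Type*}

section Semiring

variable [DecidableEq α] [Semiring α]

theorem _root_.WithTop.coe_mul_add (c : α) (x y : WithTop α) :
    (c : WithTop α) * (x + y) = c * x + c * y := by
  rcases eq_or_ne c 0 with rfl | hc
  · simp
  induction x <;> induction y <;>
    simp [WithTop.mul_top, hc, ← WithTop.coe_add, ← WithTop.coe_mul, mul_add]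

theorem _root_.WithTop.coe_mul_sum (c : α) (s : Finset ι) (x : ι → WithTop α) :
    (c : WithTop α) * ∑ i ∈ s, x i = ∑ i ∈ s, c * x i :=
  map_sum (⟨⟨(c * ·), mul_zero _⟩, WithTop.coe_mul_add c⟩ : WithTop α →+ WithTop α) x s

theorem _root_.WithTop.sum_coe_mul_eq_coe {s : Finset ι} {c : ι → α} {x : ι → WithTop α}
    (h : ∀ i ∈ s, c i ≠ 0 → x i ≠ ⊤) :
    ∑ i ∈ s, (c i : WithTop α) * x i = ((∑ i ∈ s, c i * (x i).untopD 0 : α) : WithTop α) := by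
  rw [WithTop.coe_sum]
  refine Finset.sum_congr rfl fun i hi => ?_
  rcases eq_or_ne (c i) 0 with hci | hci
  · simp [hci]
  · lift x i to α using h i hi hci with q
    simp

end Semiring

variable [Ring α] [LinearOrder α] [IsStrictOrderedRing α]

theorem _root_.WithTop.coe_add_mul_of_nonneg {a b : α} (ha : 0 ≤ a) (hb : 0 ≤ b)
    (x : WithTop α) : ((a + b : α) : WithTop α) * x = a * x + b * x := by
  induction x with
  | top =>
    rcases ha.eq_or_lt with rfl | ha
    · simp
    rw [WithTop.mul_top (WithTop.coe_ne_zero.2 (add_pos_of_pos_of_nonneg ha hb).ne'),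
      WithTop.mul_top (WithTop.coe_ne_zero.2 ha.ne'), WithTop.top_add]
  | coe x => simp [← WithTop.coe_mul, ← WithTop.coe_add, add_mul]

theorem _root_.WithTop.coe_sum_mul_of_nonneg {s : Finset ι} {c : ι → α} (hc : ∀ i ∈ s, 0 ≤ c i)
    (x : WithTop α) : ((∑ i ∈ s, c i : α) : WithTop α) * x = ∑ i ∈ s, c i * x := by
  induction s using Finset.cons_induction with
  | empty => simp
  | cons j s hj ih =>
    rw [Finset.forall_mem_cons] at hc
    rw [Finset.sum_cons, Finset.sum_cons, WithTop.coe_add_mul_of_nonneg hc.1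
      (Finset.sum_nonneg hc.2), ih hc.2]

theorem _root_.WithTop.coe_mul_le_coe_mul {c : α} (hc : 0 ≤ c) {x y : WithTop α} (h : x ≤ y) :
    (c : WithTop α) * x ≤ c * y := by
  rcases hc.eq_or_lt with rfl | hc
  · simp
  induction y with
  | top => simp [WithTop.mul_top, hc.ne']
  | coe y =>
    lift x to α using (h.trans_lt (WithTop.coe_lt_top y)).ne
    exact_mod_cast mul_le_mul_of_nonneg_left (WithTop.coe_le_coe.1 h) hc.le

theorem _root_.WithTop.le_sum_coe_mul_of_forall_le {F : Type*} [Fintype F] {μ : F → α}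
    (hμ : μ ∈ stdSimplex α F) {m : WithTop α} {x : F → WithTop α} (h : ∀ f, m ≤ x f) :
    m ≤ ∑ f, (μ f : WithTop α) * x f :=
  calc m = ((∑ f, μ f : α) : WithTop α) * m := by rw [hμ.2, WithTop.coe_one, one_mul]
    _ = ∑ f, (μ f : WithTop α) * m := WithTop.coe_sum_mul_of_nonneg (fun f _ => hμ.1 f) m
    _ ≤ ∑ f, (μ f : WithTop α) * x f :=
      Finset.sum_le_sum fun f _ => WithTop.coe_mul_le_coe_mul (hμ.1 f) (h f)

end WithTopScalars

section ValuedStructures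

variable {σ : Type} {ar : σ → ℕ}

section Val

variable [Fintype σ] {I A : Type} [Fintype I] {vI : ∀ R : σ, (Fin (ar R) → I) → ℚ}
  {vA : ∀ R : σ, (Fin (ar R) → A) → WithTop ℚ} {h : I → A}

theorem val_eq_top_iff :
    Val ar vI vA h = ⊤ ↔ ∃ R v, vI R v ≠ 0 ∧ vA R (fun i => h (v i)) = ⊤ := by
  simp [Val, WithTop.sum_eq_top, WithTop.mul_eq_top_iff]

theorem val_eq_coe (hfin : ∀ R v, vI R v ≠ 0 → vA R (fun i => h (v i)) ≠ ⊤) :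
    Val ar vI vA h =
      ((∑ R, ∑ v, vI R v * (vA R fun i => h (v i)).untopD 0 : ℚ) : WithTop ℚ) := by
  rw [WithTop.coe_sum]
  exact Finset.sum_congr rfl fun R _ => WithTop.sum_coe_mul_eq_coe fun v _ => hfin R v

end Val

variable {A B : Type}

variable (ar) in
def weightedCopy (vA : ∀ R : σ, (Fin (ar R) → A) → WithTop ℚ) (y : CVert σ ar A → ℚ) :
    ∀ R : σ, (Fin (ar R) → A) → ℚ :=
  fun R a => if vA R a = ⊤ then 0 else y ⟨R, a⟩

theorem nneg_weightedCopy {vA : ∀ R : σ, (Fin (ar R) → A) → WithTop ℚ} {y : CVert σ ar A → ℚ}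
    (hy : ∀ c, 0 ≤ y c) : NNeg ar (weightedCopy ar vA y) := fun R a => by
  unfold weightedCopy
  split_ifs
  exacts [le_rfl, hy _]

variable (ar) in
def PreservesFinite (vA : ∀ R : σ, (Fin (ar R) → A) → WithTop ℚ)
    (vB : ∀ R : σ, (Fin (ar R) → B) → WithTop ℚ) (f : A → B) : Prop :=
  ∀ c : CVert σ ar A, vA c.1 c.2 ≠ ⊤ → vB c.1 (fun i => f (c.2 i)) ≠ ⊤

variable (ar) in
def excess (vA : ∀ R : σ, (Fin (ar R) → A) → WithTop ℚ)
    (vB : ∀ R : σ, (Fin (ar R) → B) → WithTop ℚ) (f : A → B) : CVert σ ar A → ℚ :=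
  fun c => if vA c.1 c.2 = ⊤ then 0 else
    (vB c.1 fun i => f (c.2 i)).untopD 0 - (vA c.1 c.2).untopD 0

variable [Fintype σ] [Fintype A] [DecidableEq A] [Fintype B]
  {vA : ∀ R : σ, (Fin (ar R) → A) → WithTop ℚ} {vB : ∀ R : σ, (Fin (ar R) → B) → WithTop ℚ}

theorem opt_le_opt_of_isFracHom {μ : (A → B) → ℚ} (hμ : IsFracHom ar vA vB μ) {I : Type}
    [Fintype I] [DecidableEq I] {vI : ∀ R : σ, (Fin (ar R) → I) → ℚ} (hI : NNeg ar vI) :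
    Opt ar vI vB ≤ Opt ar vI vA := by
  obtain ⟨hμ0, hμ1, hμA⟩ := hμ
  refine Finset.le_inf fun h _ => ?_
  calc Opt ar vI vB ≤ ∑ f, (μ f : WithTop ℚ) * Val ar vI vB (fun u => f (h u)) :=
        WithTop.le_sum_coe_mul_of_forall_le ⟨hμ0, hμ1⟩ fun f => Finset.inf_le (Finset.mem_univ _)
    _ = ∑ R, ∑ v, (vI R v : WithTop ℚ) * ∑ f, (μ f : WithTop ℚ) * vB R fun i => f (h (v i)) := by
        simp only [Val, WithTop.coe_mul_sum]
        rw [Finset.sum_comm]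
        refine Finset.sum_congr rfl fun R _ => ?_
        rw [Finset.sum_comm]
        exact Finset.sum_congr rfl fun v _ => Finset.sum_congr rfl fun f _ => mul_left_comm _ _ _
    _ ≤ Val ar vI vA h := Finset.sum_le_sum fun R _ => Finset.sum_le_sum fun v _ =>
        WithTop.coe_mul_le_coe_mul (hI R v) (hμA R _)

theorem exists_preservesFinite_dotProduct_excess_nonpos {y : CVert σ ar A → ℚ} (hy : ∀ c, 0 < y c)
    (hopt : Opt ar (weightedCopy ar vA y) vB ≤ Opt ar (weightedCopy ar vA y) vA) :
    ∃ g, PreservesFinite ar vA vB g ∧ y ⬝ᵥ excess ar vA vB g ≤ 0 := by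
  set vI := weightedCopy ar vA y
  have hA : ∀ R a, vI R a ≠ 0 → vA R (fun i => id (a i)) ≠ ⊤ := fun R a ha hA =>
    ha (if_pos hA)
  have hid : Val ar vI vA id ≠ ⊤ := by
    rw [val_eq_coe hA]
    exact WithTop.coe_ne_top
  obtain ⟨g, -, hg⟩ := (Finset.inf_le_iff hid.lt_top).1
    (hopt.trans (Finset.inf_le (Finset.mem_univ id)))
  have hB : ∀ R a, vI R a ≠ 0 → vB R (fun i => g (a i)) ≠ ⊤ := fun R a ha hB =>
    hid (top_le_iff.1 (val_eq_top_iff.2 ⟨R, a, ha, hB⟩ ▸ hg))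
  refine ⟨g, fun c hc => hB c.1 c.2 (by simp [vI, weightedCopy, hc, (hy c).ne']), ?_⟩
  rw [val_eq_coe hB, val_eq_coe hA, WithTop.coe_le_coe] at hg
  have hdot : y ⬝ᵥ excess ar vA vB g =
      ∑ R, ∑ a, vI R a * (vB R fun i => g (a i)).untopD 0 -
        ∑ R, ∑ a, vI R a * (vA R fun i => id (a i)).untopD 0 := by
    rw [dotProduct, Fintype.sum_sigma, ← Finset.sum_sub_distrib]
    refine Finset.sum_congr rfl fun R _ => ?_
    rw [← Finset.sum_sub_distrib]
    refine Finset.sum_congr rfl fun a _ => ?_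
    simp only [vI, weightedCopy, excess, id]
    split_ifs <;> ring
  linarith

theorem isFracHom_of_sum_smul_excess_nonpos {μ : (A → B) → ℚ} (hμ : μ ∈ stdSimplex ℚ (A → B))
    (hμG : ∀ f, ¬PreservesFinite ar vA vB f → μ f = 0)
    (hle : ∑ f, μ f • excess ar vA vB f ≤ 0) : IsFracHom ar vA vB μ := by
  refine ⟨hμ.1, hμ.2, fun R a => ?_⟩
  rcases eq_or_ne (vA R a) ⊤ with hA | hA
  · simp [hA]
  have hB : ∀ f ∈ Finset.univ, μ f ≠ 0 → vB R (fun i => f (a i)) ≠ ⊤ := fun f _ hf =>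
    not_not.1 (mt (hμG f) hf) ⟨R, a⟩ hA
  have hsum : ∑ f, μ f * ((vB R fun i => f (a i)).untopD 0 - (vA R a).untopD 0) ≤ 0 := by
    simpa [excess, hA] using hle ⟨R, a⟩
  lift vA R a to ℚ using hA with b hb
  rw [WithTop.sum_coe_mul_eq_coe hB, WithTop.coe_le_coe]
  simp only [WithTop.untopD_coe, mul_sub, Finset.sum_sub_distrib, ← Finset.sum_mul, hμ.2] at hsum
  linarith

theorem exists_isFracHom_of_forall_opt_le
    (H : ∀ (I : Type) [Fintype I] [DecidableEq I] (vI : ∀ R : σ, (Fin (ar R) → I) → ℚ),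
      NNeg ar vI → Opt ar vI vB ≤ Opt ar vI vA) :
    ∃ μ, IsFracHom ar vA vB μ := by
  obtain ⟨μ, hμ, hμG, hle⟩ := exists_mem_stdSimplex_sum_smul_nonpos (excess ar vA vB)
    {f | PreservesFinite ar vA vB f} fun y hy =>
      exists_preservesFinite_dotProduct_excess_nonpos hy
        (H A _ (nneg_weightedCopy fun c => (hy c).le))
  exact ⟨μ, isFracHom_of_sum_smul_excess_nonpos hμ hμG hle⟩

end ValuedStructures

theorem stmt_0_general {σ : Type} [Fintype σ] (ar : σ → ℕ)
    {A B : Type} [Fintype A] [DecidableEq A] [Fintype B]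
    (vA : ∀ R : σ, (Fin (ar R) → A) → WithTop ℚ)
    (vB : ∀ R : σ, (Fin (ar R) → B) → WithTop ℚ) :
    (∃ μ : (A → B) → ℚ, IsFracHom ar vA vB μ) ↔
      ∀ (I : Type) [Fintype I] [DecidableEq I]
        (vI : ∀ R : σ, (Fin (ar R) → I) → ℚ), NNeg ar vI →
        Opt ar vI vB ≤ Opt ar vI vA :=
  ⟨fun ⟨_, hμ⟩ _ _ _ _ hI => opt_le_opt_of_isFracHom hμ hI, exists_isFracHom_of_forall_opt_le⟩

theorem stmt_0 {σ : Type} [Fintype σ] (ar : σ → ℕ) (har : ∀ R, 0 < ar R)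
    {A B : Type} [Fintype A] [DecidableEq A] [Fintype B]
    (vA : ∀ R : σ, (Fin (ar R) → A) → WithTop ℚ)
    (vB : ∀ R : σ, (Fin (ar R) → B) → WithTop ℚ) :
    (∃ μ : (A → B) → ℚ, IsFracHom ar vA vB μ) ↔
      ∀ (I : Type) [Fintype I] [DecidableEq I]
        (vI : ∀ R : σ, (Fin (ar R) → I) → ℚ), NNeg ar vI →
        Opt ar vI vB ≤ Opt ar vI vA :=
  stmt_0_general ar vA vB

end PVCSP
end

section
/- Let σ consist of a single binary relation symbol R and let A, B be the valued σ-structures with A = B = {0,1}, R^A(a,a) = R^B(a,a) = 3 for a ∈ {0,1}, and R^A(a,b) = 2, R^B(a,b) = 0 for a ≠ b. Let I be the non-negative finite-valued σ-structure with universe I = {v} and R^I(v,v) = 1. Then Opt^{BLP}(I,A) ≤ 2 and Opt(I,B) = 3. Consequently, BLP does not decide PVCSP(A,B). -/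
open scoped BigOperators Classical

namespace PVCSP

abbrev ar2 : Unit → ℕ := fun _ => 2

def vA2 : ∀ R : Unit, (Fin (ar2 R) → Fin 2) → WithTop ℚ :=
  fun _ t => if t 0 = t 1 then 3 else 2

def vB2 : ∀ R : Unit, (Fin (ar2 R) → Fin 2) → WithTop ℚ :=
  fun _ t => if t 0 = t 1 then 3 else 0

def vI1 : ∀ R : Unit, (Fin (ar2 R) → Unit) → ℚ := fun _ _ => 1


lemma consmk (a b : Fin 2) : (Fin.cons a (Fin.cons b finZeroElim) : Fin 2 → Fin 2) = ![a,b] := by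
  funext i; fin_cases i <;> rfl

lemma sum_pi2 {M : Type} [AddCommMonoid M] (g : (Fin 2 → Fin 2) → M) :
    ∑ t : Fin 2 → Fin 2, g t = g ![0,0] + g ![0,1] + g ![1,0] + g ![1,1] := by
  rw [← (piFinTwoEquiv (fun _ => Fin 2)).symm.sum_comp g, Fintype.sum_prod_type]
  simp [Fin.sum_univ_two, piFinTwoEquiv, consmk]; abel

def pv2 : Unit → Fin 2 → ℚ := fun _ _ => 1/2

def pc2 : ∀ R : Unit, (Fin (ar2 R) → Unit) → (Fin (ar2 R) → Fin 2) → ℚ :=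
  fun _ _ t => if t 0 = t 1 then 0 else 1/2

lemma feas2 : BLPFeas ar2 vI1 vA2 pv2 pc2 := by
  refine ⟨fun R v a _ => ?_, fun u => ?_, fun R v _ i a => ?_, fun R v _ t h => ?_⟩
  · simp only [pc2]; split_ifs <;> norm_num
  · simp [pv2, Fin.sum_univ_two]
  · rw [Finset.sum_filter, sum_pi2]
    fin_cases i <;> fin_cases a <;>
      simp [pc2, pv2, Matrix.cons_val_zero, Matrix.cons_val_one, Matrix.head_cons]
  · exfalso; revert h; simp only [vA2]; split_ifs <;> simp

lemma obj2 : objVal ar2 vI1 vA2 pc2 = ((2:ℚ) : WithTop ℚ) := by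
  have hu : ∀ f : Unit → WithTop ℚ, ∑ R : Unit, f R = f () := fun f => by
    simp
  have hv : ∀ f : (Fin (ar2 ()) → Unit) → WithTop ℚ, ∑ v : Fin (ar2 ()) → Unit, f v = f (fun _ => ()) :=
    fun f => by rw [Fintype.sum_unique]
  rw [objVal, hu, hv, sum_pi2]
  simp only [pc2, vA2, vI1]
  norm_num
  rw [show (2:WithTop ℚ) = ((2:ℚ):WithTop ℚ) from by norm_num]
  exact_mod_cast (by norm_num : (1/2:ℚ) * 2 + (1/2) * 2 = (2:ℚ))

lemma optB2 : Opt ar2 vI1 vB2 = ((3 : ℚ) : WithTop ℚ) := by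
  have hval : ∀ h : Unit → Fin 2, Val ar2 vI1 vB2 h = ((3:ℚ) : WithTop ℚ) := by
    intro h
    have hu : ∀ f : Unit → WithTop ℚ, ∑ R : Unit, f R = f () := fun f => by simp
    have hv : ∀ f : (Fin (ar2 ()) → Unit) → WithTop ℚ, ∑ v : Fin (ar2 ()) → Unit, f v = f (fun _ => ()) :=
      fun f => by rw [Fintype.sum_unique]
    rw [Val, hu, hv]
    simp only [vI1, vB2, if_pos rfl]
    norm_num
  apply le_antisymm
  · exact le_trans (Finset.inf_le (Finset.mem_univ (fun _ => 0))) (le_of_eq (hval _))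
  · exact Finset.le_inf fun h _ => le_of_eq (hval h).symm

lemma blp_le2 : OptBLP ar2 vI1 vA2 ≤ (2 : EReal) := by
  have hmem : toE (objVal ar2 vI1 vA2 pc2) ∈
      { x : EReal | ∃ pv pc, BLPFeas ar2 vI1 vA2 pv pc ∧ x = toE (objVal ar2 vI1 vA2 pc) } :=
    ⟨pv2, pc2, feas2, rfl⟩
  refine le_trans (sInf_le hmem) (le_of_eq ?_)
  rw [obj2]
  show ((((2:ℚ):ℝ)) : EReal) = (2 : EReal)
  exact_mod_cast rfl

theorem stmt_15 :
    OptBLP ar2 vI1 vA2 ≤ (2 : EReal) ∧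
    Opt ar2 vI1 vB2 = ((3 : ℚ) : WithTop ℚ) ∧
    ¬ (∀ (I : Type) [Fintype I] [DecidableEq I]
        (vI : ∀ R : Unit, (Fin (ar2 R) → I) → ℚ), NNeg ar2 vI →
        toE (Opt ar2 vI vB2) ≤ OptBLP ar2 vI vA2) := by
  refine ⟨blp_le2, optB2, fun H => ?_⟩
  have h := H Unit vI1 (fun R v => by norm_num [vI1])
  rw [optB2] at h
  have h3 : toE ((3:ℚ) : WithTop ℚ) = (((3:ℝ)) : EReal) := by
    show ((((3:ℚ):ℝ)) : EReal) = _
    norm_num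
  rw [h3] at h
  have h2 : (2 : EReal) = (((2:ℝ)) : EReal) := by exact_mod_cast rfl
  have := le_trans h blp_le2
  rw [h2, EReal.coe_le_coe_iff] at this
  norm_num at this

end PVCSP
end

section
/- Let σ consist of a single binary relation symbol R and let A be the valued σ-structure with A = {0,1}, R^A(a,a) = 3 for a ∈ {0,1} and R^A(a,b) = 2 for a ≠ b. Then for every non-negative finite-valued σ-structure I: Opt^{SA¹}(I,A) ≥ 3·V_l(I) + 2·V_e(I), where V_l(I) = Σ_{v∈I} R^I(v,v) and V_e(I) = Σ_{u,v∈I, u≠v} R^I(u,v). -/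
open scoped BigOperators Classical

namespace PVCSP

theorem stmt_16 {I : Type} [Fintype I] [DecidableEq I]
    (vI : ∀ R : Unit, (Fin (ar2 R) → I) → ℚ) (hnn : NNeg ar2 vI) :
    (((3 * (∑ u : I, vI () (fun _ => u)) +
        2 * (∑ t ∈ Finset.univ.filter (fun t : Fin 2 → I => t 0 ≠ t 1), vI () t) : ℚ) : ℝ) : EReal)
      ≤ OptSA1 ar2 vI vA2 := by
  apply le_sInf
  rintro x ⟨pv, pc, ⟨⟨hpos, hsum, hmarg, htop⟩, hsa⟩, rfl⟩
  set w : (Fin 2 → Fin 2) → ℚ := fun t => if t 0 = t 1 then 3 else 2 with hw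
  set q : ℚ := ∑ v : Fin 2 → I, ∑ t : Fin 2 → Fin 2, pc () v t * (vI () v * w t) with hq
  have hobj : objVal ar2 vI vA2 pc = ((q : ℚ) : WithTop ℚ) := by
    unfold objVal
    rw [hq, Fintype.sum_unique]
    rw [WithTop.coe_sum]
    refine Finset.sum_congr rfl fun v _ => ?_
    rw [WithTop.coe_sum]
    refine Finset.sum_congr rfl fun t _ => ?_
    have hA : vA2 () t = ((w t : ℚ) : WithTop ℚ) := by
      simp only [vA2, hw]
      split <;> norm_num
    rw [hA]
    push_cast
    ring
  have key : ∀ v : Fin 2 → I,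
      vI () v * (if v 0 = v 1 then (3:ℚ) else 2)
        ≤ ∑ t : Fin 2 → Fin 2, pc () v t * (vI () v * w t) := by
    intro v
    rcases (hnn () v).lt_or_eq with hv | hv
    · have hone : ∑ t : Fin 2 → Fin 2, pc () v t = 1 := by
        calc ∑ t : Fin 2 → Fin 2, pc () v t
            = ∑ a : Fin 2, ∑ t ∈ Finset.univ.filter
                (fun t : Fin 2 → Fin 2 => t 0 = a), pc () v t :=
              (Finset.sum_fiberwise _ _ _).symm
          _ = ∑ a : Fin 2, pv (v 0) a := by
              refine Finset.sum_congr rfl fun a _ => ?_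
              exact (hmarg () v hv 0 a).symm
          _ = 1 := hsum (v 0)
      by_cases hd : v 0 = v 1
      · have hz : ∀ t : Fin 2 → Fin 2, t 0 ≠ t 1 → pc () v t = 0 :=
          fun t ht => hsa () v hv t ⟨0, 1, hd, ht⟩
        have heq : ∑ t : Fin 2 → Fin 2, pc () v t * (vI () v * w t)
            = ∑ t : Fin 2 → Fin 2, pc () v t * (vI () v * 3) := by
          refine Finset.sum_congr rfl fun t _ => ?_
          by_cases h : t 0 = t 1
          · simp [hw, h]
          · simp [hz t h]
        rw [heq, ← Finset.sum_mul, hone, one_mul, if_pos hd]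
      · rw [if_neg hd]
        calc vI () v * 2 = ∑ t : Fin 2 → Fin 2, pc () v t * (vI () v * 2) := by
              rw [← Finset.sum_mul, hone, one_mul]
          _ ≤ ∑ t : Fin 2 → Fin 2, pc () v t * (vI () v * w t) := by
              apply Finset.sum_le_sum
              intro t _
              have h2 : (2:ℚ) ≤ w t := by
                simp only [hw]; split <;> norm_num
              have h3 := hpos () v t hv
              nlinarith [mul_nonneg (mul_nonneg h3 hv.le) (sub_nonneg.mpr h2)]
    · simp [← hv]
  have hdiag : ∑ v ∈ Finset.univ.filter (fun v : Fin 2 → I => v 0 = v 1),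
      vI () v * (3:ℚ) = ∑ u : I, vI () (fun _ => u) * 3 := by
    refine Finset.sum_nbij' (fun v => v 0) (fun u => fun _ => u) ?_ ?_ ?_ ?_ ?_
    · intro v hv; exact Finset.mem_univ _
    · intro u hu; simp
    · intro v hv
      simp only [Finset.mem_filter] at hv
      funext i
      fin_cases i
      · rfl
      · exact hv.2
    · intro u hu; rfl
    · intro v hv
      simp only [Finset.mem_filter] at hv
      have h : (fun _ => v 0 : Fin 2 → I) = v := by
        funext i
        fin_cases i
        · rfl
        · exact hv.2
      show vI () v * 3 = vI () (fun _ => v 0) * 3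
      rw [h]
  have hsplit : 3 * (∑ u : I, vI () (fun _ => u)) +
      2 * (∑ t ∈ Finset.univ.filter (fun t : Fin 2 → I => t 0 ≠ t 1), vI () t)
      = ∑ v : Fin 2 → I, vI () v * (if v 0 = v 1 then (3:ℚ) else 2) := by
    have : ∀ v : Fin 2 → I, vI () v * (if v 0 = v 1 then (3:ℚ) else 2)
        = if v 0 = v 1 then vI () v * 3 else vI () v * 2 := by
      intro v; split <;> rfl
    simp only [this]
    rw [Finset.sum_ite, hdiag, ← Finset.sum_mul, ← Finset.sum_mul]
    have hfilt : Finset.univ.filter (fun v : Fin 2 → I => ¬ v 0 = v 1)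
        = Finset.univ.filter (fun t : Fin 2 → I => t 0 ≠ t 1) := rfl
    rw [hfilt]
    ring
  have hqle : 3 * (∑ u : I, vI () (fun _ => u)) +
      2 * (∑ t ∈ Finset.univ.filter (fun t : Fin 2 → I => t 0 ≠ t 1), vI () t) ≤ q := by
    rw [hsplit, hq]
    exact Finset.sum_le_sum fun v _ => key v
  rw [hobj]
  show _ ≤ toE ((q : ℚ) : WithTop ℚ)
  have : toE ((q : ℚ) : WithTop ℚ) = ((q : ℝ) : EReal) := rfl
  rw [this]
  exact_mod_cast hqle

end PVCSP
end
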